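/- arXiv:2503.14764 — 4 statements merged into one kernel-verified Lean document; each statement's English description precedes it below -/
import Mathlib

section
/- Let F : A → V map each admissible coefficient μ to the unique weak solution u(μ) of the Robin problem −div(α∇u) + μu = f in Ω, α ∂u/∂n + (1/ζ)u = 0 on ∂Ω. Then F is Lipschitz continuous on A: for μ̃, μ̃̃ ∈ A, ‖F(μ̃) − F(μ̃̃)‖_{H¹(Ω)} ≤ c_b² c_f ‖μ̃ − μ̃̃‖_{L^∞(Ω)}, where c_b = 1/min{α, μ_min} and c_f = ‖f‖_{H^{-1}(Ω)}. -/
open MeasureTheory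
open scoped RealInnerProductSpace

/-- The bilinear form `a(μ; u, v) = α ∫_Ω ∇u·∇v + ∫_Ω μ u v + ζ⁻¹ ∫_{∂Ω} u v`
of the Robin problem, in an abstract Hilbert-space model of `H¹(Ω)`:
`grad` is the gradient operator, `ι` the embedding into functions on `Ω`
(`L²(Ω)`), and `τ` the trace operator onto the boundary `Γ = ∂Ω`. -/
noncomputable def bform {V G Ω Γ : Type*}
    [NormedAddCommGroup V] [InnerProductSpace ℝ V]
    [NormedAddCommGroup G] [InnerProductSpace ℝ G]
    [MeasurableSpace Ω] [MeasurableSpace Γ]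
    (vol : Measure Ω) (surf : Measure Γ)
    (α ζ : ℝ) (grad : V →ₗ[ℝ] G) (ι : V →ₗ[ℝ] Ω → ℝ) (τ : V →ₗ[ℝ] Γ → ℝ)
    (μ : Ω → ℝ) (u v : V) : ℝ :=
  α * ⟪grad u, grad v⟫ + (∫ x, μ x * ι u x * ι v x ∂vol)
    + ζ⁻¹ * ∫ y, τ u y * τ v y ∂surf

/-- Linearity of `bform` in the first solution argument (difference form). -/
lemma bform_sub_left {V G Ω Γ : Type*}
    [NormedAddCommGroup V] [InnerProductSpace ℝ V]
    [NormedAddCommGroup G] [InnerProductSpace ℝ G]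
    [MeasurableSpace Ω] [MeasurableSpace Γ]
    (vol : Measure Ω) (surf : Measure Γ)
    (α ζ : ℝ) (grad : V →ₗ[ℝ] G) (ι : V →ₗ[ℝ] Ω → ℝ) (τ : V →ₗ[ℝ] Γ → ℝ)
    (μ : Ω → ℝ) (u₁ u₂ v : V)
    (h1 : Integrable (fun x => μ x * ι u₁ x * ι v x) vol)
    (h2 : Integrable (fun x => μ x * ι u₂ x * ι v x) vol)
    (h3 : Integrable (fun y => τ u₁ y * τ v y) surf)
    (h4 : Integrable (fun y => τ u₂ y * τ v y) surf) :
    bform vol surf α ζ grad ι τ μ (u₁ - u₂) v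
      = bform vol surf α ζ grad ι τ μ u₁ v - bform vol surf α ζ grad ι τ μ u₂ v := by
  unfold bform
  have hg : (⟪grad (u₁ - u₂), grad v⟫ : ℝ) = ⟪grad u₁, grad v⟫ - ⟪grad u₂, grad v⟫ := by
    rw [map_sub, inner_sub_left]
  have hmid : (∫ x, μ x * ι (u₁ - u₂) x * ι v x ∂vol)
      = (∫ x, μ x * ι u₁ x * ι v x ∂vol) - ∫ x, μ x * ι u₂ x * ι v x ∂vol := by
    rw [← integral_sub h1 h2]
    congr 1
    funext x
    simp [map_sub, Pi.sub_apply]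
    ring
  have htau : (∫ y, τ (u₁ - u₂) y * τ v y ∂surf)
      = (∫ y, τ u₁ y * τ v y ∂surf) - ∫ y, τ u₂ y * τ v y ∂surf := by
    rw [← integral_sub h3 h4]
    congr 1
    funext y
    simp [map_sub, Pi.sub_apply]
    ring
  rw [hg, hmid, htau]
  ring

/-- Dependence of `bform` on the coefficient `μ`. -/
lemma bform_mu_diff {V G Ω Γ : Type*}
    [NormedAddCommGroup V] [InnerProductSpace ℝ V]
    [NormedAddCommGroup G] [InnerProductSpace ℝ G]
    [MeasurableSpace Ω] [MeasurableSpace Γ]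
    (vol : Measure Ω) (surf : Measure Γ)
    (α ζ : ℝ) (grad : V →ₗ[ℝ] G) (ι : V →ₗ[ℝ] Ω → ℝ) (τ : V →ₗ[ℝ] Γ → ℝ)
    (μ₁ μ₂ : Ω → ℝ) (u v : V)
    (h1 : Integrable (fun x => μ₁ x * ι u x * ι v x) vol)
    (h2 : Integrable (fun x => μ₂ x * ι u x * ι v x) vol) :
    bform vol surf α ζ grad ι τ μ₁ u v
      = bform vol surf α ζ grad ι τ μ₂ u v
        + ∫ x, (μ₁ x - μ₂ x) * ι u x * ι v x ∂vol := by
  unfold bform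
  have : (∫ x, (μ₁ x - μ₂ x) * ι u x * ι v x ∂vol)
      = (∫ x, μ₁ x * ι u x * ι v x ∂vol) - ∫ x, μ₂ x * ι u x * ι v x ∂vol := by
    rw [← integral_sub h1 h2]
    congr 1
    funext x
    ring
  rw [this]
  ring

/-- The solution operator `F : μ ↦ u(μ)` of the Robin problem is
Lipschitz on the admissible set:
`‖F(μ₁) − F(μ₂)‖_{H¹} ≤ c_b² c_f ‖μ₁ − μ₂‖_{L^∞}`, with `c_b = 1/min{α, μmin}`,
`c_f = ‖f‖_{H^{-1}}`.  The `L^∞` distance is expressed through an a.e. bound `K`. -/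
theorem statement_2 {V G Ω Γ : Type*}
    [NormedAddCommGroup V] [InnerProductSpace ℝ V] [CompleteSpace V]
    [NormedAddCommGroup G] [InnerProductSpace ℝ G]
    [MeasurableSpace Ω] [MeasurableSpace Γ]
    (vol : Measure Ω) (surf : Measure Γ)
    (α ζ μmin μmax : ℝ) (hα : 0 < α) (hζ : 0 < ζ) (hμmin : 0 < μmin)
    (grad : V →ₗ[ℝ] G) (ι : V →ₗ[ℝ] Ω → ℝ) (τ : V →ₗ[ℝ] Γ → ℝ)
    -- the `H¹(Ω)` norm of `V`
    (hnorm : ∀ v : V, ‖v‖ ^ 2 = ‖grad v‖ ^ 2 + ∫ x, (ι v x) ^ 2 ∂vol)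
    -- boundedness of the trace operator
    (Ct : ℝ) (hCt : 0 < Ct)
    (htr : ∀ v : V, ∫ y, (τ v y) ^ 2 ∂surf ≤ Ct * ‖v‖ ^ 2)
    -- integrability of the products appearing in the computations
    (hι : ∀ (w : Ω → ℝ) (u v : V), Integrable (fun x => w x * ι u x * ι v x) vol)
    (hτ : ∀ u v : V, Integrable (fun y => τ u y * τ v y) surf)
    (l : V →L[ℝ] ℝ)
    (F : (Ω → ℝ) → V)
    (hF : ∀ μ : Ω → ℝ, (∀ᵐ x ∂vol, μmin ≤ μ x ∧ μ x ≤ μmax) →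
      ∀ v : V, bform vol surf α ζ grad ι τ μ (F μ) v = l v)
    (μ₁ μ₂ : Ω → ℝ)
    (h₁ : ∀ᵐ x ∂vol, μmin ≤ μ₁ x ∧ μ₁ x ≤ μmax)
    (h₂ : ∀ᵐ x ∂vol, μmin ≤ μ₂ x ∧ μ₂ x ≤ μmax)
    (K : ℝ) (hK0 : 0 ≤ K)
    (hK : ∀ᵐ x ∂vol, |μ₁ x - μ₂ x| ≤ K) :
    ‖F μ₁ - F μ₂‖ ≤ ((min α μmin)⁻¹) ^ 2 * ‖l‖ * K := by
  set c : ℝ := min α μmin with hc_def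
  have hc : 0 < c := lt_min hα hμmin
  -- L² bound of the interior part by the full norm
  have hι_sq_int : ∀ v : V, Integrable (fun x => ι v x * ι v x) vol := by
    intro v
    have := hι (fun _ => (1 : ℝ)) v v
    simpa using this
  have hι_le : ∀ v : V, (∫ x, ι v x * ι v x ∂vol) ≤ ‖v‖ ^ 2 := by
    intro v
    have h := hnorm v
    have : (∫ x, (ι v x) ^ 2 ∂vol) = ∫ x, ι v x * ι v x ∂vol := by
      congr 1; funext x; ring
    nlinarith [sq_nonneg ‖grad v‖]
  have hι_nonneg : ∀ v : V, 0 ≤ ∫ x, ι v x * ι v x ∂vol := fun v =>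
    integral_nonneg fun x => mul_self_nonneg _
  -- coercivity
  have hcoer : ∀ (μ : Ω → ℝ), (∀ᵐ x ∂vol, μmin ≤ μ x ∧ μ x ≤ μmax) → ∀ v : V,
      c * ‖v‖ ^ 2 ≤ bform vol surf α ζ grad ι τ μ v v := by
    intro μ hμ v
    have hτnn : 0 ≤ ∫ y, τ v y * τ v y ∂surf :=
      integral_nonneg fun y => mul_self_nonneg _
    have hmono : (∫ x, μmin * ι v x * ι v x ∂vol) ≤ ∫ x, μ x * ι v x * ι v x ∂vol := by
      refine integral_mono_ae (hι (fun _ => μmin) v v) (hι μ v v) ?_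
      filter_upwards [hμ] with x hx
      have := mul_self_nonneg (ι v x)
      nlinarith [hx.1]
    have hconst : (∫ x, μmin * ι v x * ι v x ∂vol)
        = μmin * ∫ x, ι v x * ι v x ∂vol := by
      rw [← integral_const_mul]
      congr 1; funext x; ring
    have hinner : (⟪grad v, grad v⟫ : ℝ) = ‖grad v‖ ^ 2 := real_inner_self_eq_norm_sq _
    have hnv := hnorm v
    have hsq : (∫ x, (ι v x) ^ 2 ∂vol) = ∫ x, ι v x * ι v x ∂vol := by
      congr 1; funext x; ring
    unfold bform
    rw [hinner]
    have h1 : c ≤ α := min_le_left _ _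
    have h2 : c ≤ μmin := min_le_right _ _
    have hζinv : 0 ≤ ζ⁻¹ := le_of_lt (inv_pos.mpr hζ)
    nlinarith [sq_nonneg ‖grad v‖, hι_nonneg v, mul_nonneg hζinv hτnn,
      mul_le_mul_of_nonneg_right h1 (sq_nonneg ‖grad v‖),
      mul_le_mul_of_nonneg_right h2 (hι_nonneg v)]
  set u₁ : V := F μ₁
  set u₂ : V := F μ₂
  set w : V := u₁ - u₂ with hw_def
  -- stability bound for u₂
  have hstab : c * ‖u₂‖ ≤ ‖l‖ := by
    have h := hcoer μ₂ h₂ u₂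
    rw [hF μ₂ h₂ u₂] at h
    have hle : l u₂ ≤ ‖l‖ * ‖u₂‖ := by
      calc l u₂ ≤ |l u₂| := le_abs_self _
        _ = ‖l u₂‖ := (Real.norm_eq_abs _).symm
        _ ≤ ‖l‖ * ‖u₂‖ := l.le_opNorm u₂
    rcases eq_or_lt_of_le (norm_nonneg u₂) with h0 | h0
    · rw [← h0, mul_zero]; exact norm_nonneg l
    · nlinarith
  -- the difference equation: bform μ₁ w w = -∫ (μ₁-μ₂) (ι u₂) (ι w)
  have hdiff : bform vol surf α ζ grad ι τ μ₁ w w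
      = - ∫ x, (μ₁ x - μ₂ x) * ι u₂ x * ι w x ∂vol := by
    have e1 : bform vol surf α ζ grad ι τ μ₁ w w
        = bform vol surf α ζ grad ι τ μ₁ u₁ w - bform vol surf α ζ grad ι τ μ₁ u₂ w :=
      bform_sub_left vol surf α ζ grad ι τ μ₁ u₁ u₂ w
        (hι μ₁ u₁ w) (hι μ₁ u₂ w) (hτ u₁ w) (hτ u₂ w)
    have e2 : bform vol surf α ζ grad ι τ μ₁ u₂ w
        = bform vol surf α ζ grad ι τ μ₂ u₂ w
          + ∫ x, (μ₁ x - μ₂ x) * ι u₂ x * ι w x ∂vol :=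
      bform_mu_diff vol surf α ζ grad ι τ μ₁ μ₂ u₂ w (hι μ₁ u₂ w) (hι μ₂ u₂ w)
    rw [e1, e2, hF μ₁ h₁ w, hF μ₂ h₂ w]
    ring
  -- the key estimate, with a free parameter ε > 0
  have hkey : ∀ ε : ℝ, 0 < ε →
      c * ‖w‖ ^ 2 ≤ K / 2 * (ε * ‖u₂‖ ^ 2 + ε⁻¹ * ‖w‖ ^ 2) := by
    intro ε hε
    have h0 := hcoer μ₁ h₁ w
    rw [hdiff] at h0
    have habs : - (∫ x, (μ₁ x - μ₂ x) * ι u₂ x * ι w x ∂vol)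
        ≤ ∫ x, |μ₁ x - μ₂ x| * |ι u₂ x| * |ι w x| ∂vol := by
      have h1 : |∫ x, (μ₁ x - μ₂ x) * ι u₂ x * ι w x ∂vol|
          ≤ ∫ x, |μ₁ x - μ₂ x| * |ι u₂ x| * |ι w x| ∂vol := by
        simpa [Real.norm_eq_abs, abs_mul] using
          norm_integral_le_integral_norm (fun x => (μ₁ x - μ₂ x) * ι u₂ x * ι w x) (μ := vol)
      calc - (∫ x, (μ₁ x - μ₂ x) * ι u₂ x * ι w x ∂vol)
          ≤ |∫ x, (μ₁ x - μ₂ x) * ι u₂ x * ι w x ∂vol| := neg_le_abs _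
        _ ≤ _ := h1
    have hpt : (∫ x, |μ₁ x - μ₂ x| * |ι u₂ x| * |ι w x| ∂vol)
        ≤ ∫ x, K / 2 * (ε * (ι u₂ x * ι u₂ x) + ε⁻¹ * (ι w x * ι w x)) ∂vol := by
      have hint1 : Integrable (fun x => |μ₁ x - μ₂ x| * |ι u₂ x| * |ι w x|) vol := by
        refine (hι (fun x => μ₁ x - μ₂ x) u₂ w).abs.congr ?_
        filter_upwards with x
        rw [abs_mul, abs_mul]
      refine integral_mono_ae hint1 ?_ ?_
      · have h1 := (hι_sq_int u₂).const_mul (ε)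
        have h2 := (hι_sq_int w).const_mul (ε⁻¹)
        exact (h1.add h2).const_mul (K / 2)
      · filter_upwards [hK] with x hx
        have h2 : |ι u₂ x| * |ι w x| ≤ (ε * (ι u₂ x * ι u₂ x) + ε⁻¹ * (ι w x * ι w x)) / 2 := by
          set a := |ι u₂ x| with ha
          set b := |ι w x| with hb
          have hau : a * a = ι u₂ x * ι u₂ x := by rw [ha, ← abs_mul, abs_mul_self]
          have hbw : b * b = ι w x * ι w x := by rw [hb, ← abs_mul, abs_mul_self]
          rw [← hau, ← hbw]
          have hkey : ε * (a * a) - 2 * (a * b) + ε⁻¹ * (b * b)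
              = ε⁻¹ * (ε * a - b) ^ 2 := by
            field_simp
            ring
          have hnn : 0 ≤ ε⁻¹ * (ε * a - b) ^ 2 :=
            mul_nonneg (le_of_lt (inv_pos.mpr hε)) (sq_nonneg _)
          linarith [hkey ▸ hnn]
        calc |μ₁ x - μ₂ x| * |ι u₂ x| * |ι w x|
            = |μ₁ x - μ₂ x| * (|ι u₂ x| * |ι w x|) := by ring
          _ ≤ K * ((ε * (ι u₂ x * ι u₂ x) + ε⁻¹ * (ι w x * ι w x)) / 2) := by
              apply mul_le_mul hx h2 (mul_nonneg (abs_nonneg _) (abs_nonneg _)) hK0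
          _ = K / 2 * (ε * (ι u₂ x * ι u₂ x) + ε⁻¹ * (ι w x * ι w x)) := by ring
    have hval : (∫ x, K / 2 * (ε * (ι u₂ x * ι u₂ x) + ε⁻¹ * (ι w x * ι w x)) ∂vol)
        ≤ K / 2 * (ε * ‖u₂‖ ^ 2 + ε⁻¹ * ‖w‖ ^ 2) := by
      have hsplit : (∫ x, K / 2 * (ε * (ι u₂ x * ι u₂ x) + ε⁻¹ * (ι w x * ι w x)) ∂vol)
          = K / 2 * (ε * (∫ x, ι u₂ x * ι u₂ x ∂vol) + ε⁻¹ * ∫ x, ι w x * ι w x ∂vol) := by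
        rw [integral_const_mul,
          integral_add ((hι_sq_int u₂).const_mul ε) ((hι_sq_int w).const_mul ε⁻¹),
          integral_const_mul, integral_const_mul]
      rw [hsplit]
      have hεinv : 0 ≤ ε⁻¹ := le_of_lt (inv_pos.mpr hε)
      have := hι_le u₂
      have := hι_le w
      have hK2 : 0 ≤ K / 2 := by linarith
      nlinarith [mul_le_mul_of_nonneg_left (hι_le u₂) (le_of_lt hε),
        mul_le_mul_of_nonneg_left (hι_le w) hεinv]
    linarith
  -- conclude
  rcases eq_or_lt_of_le (norm_nonneg w) with h0 | h0
  · rw [← h0]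
    have : 0 ≤ ((min α μmin)⁻¹) ^ 2 := sq_nonneg _
    exact mul_nonneg (mul_nonneg this (norm_nonneg l)) hK0
  · rcases eq_or_lt_of_le (norm_nonneg u₂) with hM | hM
    · -- ‖u₂‖ = 0 : choose ε large
      exfalso
      have hε : 0 < K / (2 * c) + 1 := by positivity
      have h := hkey (K / (2 * c) + 1) hε
      rw [← hM] at h
      have hw2 : 0 < ‖w‖ ^ 2 := by positivity
      have hlt : K / 2 * (K / (2 * c) + 1)⁻¹ < c := by
        rcases eq_or_lt_of_le hK0 with hK' | hK'
        · rw [← hK']; simpa using hc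
        · have h1 : K / (2 * c) < K / (2 * c) + 1 := by linarith
          have h2 : (K / (2 * c) + 1)⁻¹ < (K / (2 * c))⁻¹ := by
            apply inv_strictAnti₀ (by positivity) h1
          have h3 : K / 2 * (K / (2 * c))⁻¹ = c := by
            field_simp
          calc K / 2 * (K / (2 * c) + 1)⁻¹ < K / 2 * (K / (2 * c))⁻¹ := by
                apply mul_lt_mul_of_pos_left h2 (by linarith)
            _ = c := h3
      nlinarith
    · -- ‖u₂‖ > 0 : choose ε = ‖w‖ / ‖u₂‖
      have hε : 0 < ‖w‖ / ‖u₂‖ := div_pos h0 hM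
      have h := hkey (‖w‖ / ‖u₂‖) hε
      have hinv : (‖w‖ / ‖u₂‖)⁻¹ = ‖u₂‖ / ‖w‖ := by
        rw [inv_div]
      rw [hinv] at h
      have he1 : ‖w‖ / ‖u₂‖ * ‖u₂‖ ^ 2 = ‖w‖ * ‖u₂‖ := by
        field_simp
      have he2 : ‖u₂‖ / ‖w‖ * ‖w‖ ^ 2 = ‖u₂‖ * ‖w‖ := by
        field_simp
      rw [he1, he2] at h
      -- h : c * ‖w‖ ^ 2 ≤ K / 2 * (‖w‖ * ‖u₂‖ + ‖u₂‖ * ‖w‖) = K * ‖u₂‖ * ‖w‖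
      have h' : c * ‖w‖ ≤ K * ‖u₂‖ := by nlinarith
      have hccw : c * (c * ‖w‖) ≤ K * ‖l‖ := by
        calc c * (c * ‖w‖) ≤ c * (K * ‖u₂‖) :=
              mul_le_mul_of_nonneg_left h' (le_of_lt hc)
          _ = K * (c * ‖u₂‖) := by ring
          _ ≤ K * ‖l‖ := mul_le_mul_of_nonneg_left hstab hK0
      have hcne : c ≠ 0 := ne_of_gt hc
      have hfin : (c⁻¹) ^ 2 * ‖l‖ * K = (K * ‖l‖) / (c * c) := by
        field_simp
      rw [hfin, le_div_iff₀ (mul_pos hc hc)]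
      calc ‖w‖ * (c * c) = c * (c * ‖w‖) := by ring
        _ ≤ K * ‖l‖ := hccw
end

section
/- With F as above, for μ in the interior of A and any admissible direction ν, the map F is Fréchet differentiable at μ with derivative DF(μ)ν = u̇, where u̇ ∈ H¹(Ω) is the unique solution of a(μ; u̇, v) = −∫_Ω ν u v dx for all v ∈ H¹(Ω), u = F(μ). Moreover the remainder estimate ‖F(μ+ν) − F(μ) − u̇‖_{H¹(Ω)} ≤ c_b³ c_f ‖ν‖²_{L^∞(Ω)} holds. -/
open MeasureTheory Filter Topology
open scoped RealInnerProductSpace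

theorem integral_abs_mul_le_sqrt_mul_sqrt {X : Type*} [MeasurableSpace X] {m : Measure X}
    {f g : X → ℝ} (hfg : Integrable (fun x => f x * g x) m)
    (hf : Integrable (fun x => f x * f x) m) (hg : Integrable (fun x => g x * g x) m) :
    ∫ x, |f x * g x| ∂m ≤ √(∫ x, f x * f x ∂m) * √(∫ x, g x * g x ∂m) := by
  set A := ∫ x, f x * f x ∂m
  set B := ∫ x, g x * g x ∂m
  -- pointwise `2ab |f g| ≤ b² f² + a² g²`, integrated
  have amgm : ∀ a b : ℝ, 0 < a → 0 < b → A ≤ a ^ 2 → B ≤ b ^ 2 →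
      ∫ x, |f x * g x| ∂m ≤ a * b := fun a b ha hb hA hB =>
    calc ∫ x, |f x * g x| ∂m ≤ ∫ x, (b / a * (f x * f x) + a / b * (g x * g x)) / 2 ∂m := by
          refine integral_mono hfg.abs (((hf.const_mul _).add (hg.const_mul _)).div_const 2)
            fun x => ?_
          have key : (b / a * (f x * f x) + a / b * (g x * g x)) / 2 - |f x * g x|
              = (b * |f x| - a * |g x|) ^ 2 / (2 * a * b) := by
            rw [abs_mul, ← abs_mul_abs_self (f x), ← abs_mul_abs_self (g x)]
            field_simp
            ring
          have : 0 ≤ (b * |f x| - a * |g x|) ^ 2 / (2 * a * b) := by positivity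
          linarith
      _ = (b / a * A + a / b * B) / 2 := by
          rw [integral_div, integral_add (hf.const_mul _) (hg.const_mul _), integral_const_mul,
            integral_const_mul]
      _ ≤ (b / a * a ^ 2 + a / b * b ^ 2) / 2 := by gcongr
      _ = a * b := by field_simp; ring
  have hA : 0 ≤ A := integral_nonneg fun x => mul_self_nonneg _
  have hB : 0 ≤ B := integral_nonneg fun x => mul_self_nonneg _
  have hlim : Tendsto (fun ε => (√A + ε) * (√B + ε)) (𝓝[>] 0) (𝓝 (√A * √B)) := by
    refine tendsto_nhdsWithin_of_tendsto_nhds ?_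
    exact (by fun_prop : Continuous fun ε : ℝ => (√A + ε) * (√B + ε)).tendsto' 0 _ (by simp)
  -- `A` or `B` may vanish, so `amgm` is applied to `√A + ε` and `√B + ε` and `ε → 0⁺`
  refine ge_of_tendsto hlim (eventually_nhdsWithin_of_forall fun ε (hε : 0 < ε) => ?_)
  refine amgm _ _ (by positivity) (by positivity) ?_ ?_
  · calc A = √A ^ 2 := (Real.sq_sqrt hA).symm
      _ ≤ _ := by gcongr; linarith
  · calc B = √B ^ 2 := (Real.sq_sqrt hB).symm
      _ ≤ _ := by gcongr; linarith

theorem le_inv_mul_of_mul_sq_le_mul {c M x : ℝ} (hc : 0 < c) (hM : 0 ≤ M) (hx : 0 ≤ x)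
    (h : c * x ^ 2 ≤ M * x) : x ≤ c⁻¹ * M := by
  rw [← div_eq_inv_mul, le_div_iff₀' hc]
  rcases hx.eq_or_lt with rfl | hx
  · simpa using hM
  · nlinarith

theorem IsCoercive.existsUnique_apply_eq {V : Type*} [NormedAddCommGroup V]
    [InnerProductSpace ℝ V] [CompleteSpace V] {B : V →L[ℝ] V →L[ℝ] ℝ} (hB : IsCoercive B)
    (f : V →L[ℝ] ℝ) : ∃! u, ∀ v, B u v = f v := by
  set E := hB.continuousLinearEquivOfBilin
  refine ⟨E.symm ((InnerProductSpace.toDual ℝ V).symm f), fun v => ?_, fun u hu => ?_⟩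
  · rw [← hB.continuousLinearEquivOfBilin_apply, E.apply_symm_apply,
      InnerProductSpace.toDual_symm_apply]
  · refine E.injective (ext_inner_right ℝ fun v => ?_)
    rw [E.apply_symm_apply, hB.continuousLinearEquivOfBilin_apply, hu,
      InnerProductSpace.toDual_symm_apply]

section

variable {V X : Type*} [AddCommGroup V] [Module ℝ V] [MeasurableSpace X]

noncomputable def integralMulBilin (m : Measure X) (S T : V →ₗ[ℝ] X → ℝ)
    (h : ∀ u v, Integrable (fun x => S u x * T v x) m) : V →ₗ[ℝ] V →ₗ[ℝ] ℝ :=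
  LinearMap.mk₂ ℝ (fun u v => ∫ x, S u x * T v x ∂m)
    (fun u₁ u₂ v => by
      simp only [map_add, Pi.add_apply, add_mul]
      exact integral_add (h u₁ v) (h u₂ v))
    (fun c u v => by
      simp only [map_smul, Pi.smul_apply, smul_eq_mul, mul_assoc]
      exact integral_const_mul c _)
    (fun u v₁ v₂ => by
      simp only [map_add, Pi.add_apply, mul_add]
      exact integral_add (h u v₁) (h u v₂))
    (fun c u v => by
      simp only [map_smul, Pi.smul_apply, smul_eq_mul, mul_left_comm _ c]
      exact integral_const_mul c _)

end

section

variable {V G Ω Γ : Type*}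
    [NormedAddCommGroup V] [InnerProductSpace ℝ V]
    [NormedAddCommGroup G] [InnerProductSpace ℝ G]
    [MeasurableSpace Ω] [MeasurableSpace Γ]
    {vol : Measure Ω} {surf : Measure Γ}
    {α ζ : ℝ} {grad : V →ₗ[ℝ] G} {ι : V →ₗ[ℝ] Ω → ℝ} {τ : V →ₗ[ℝ] Γ → ℝ}

variable (vol surf α ζ grad ι τ) in
noncomputable def bformBilin (μ : Ω → ℝ)
    (hι : ∀ u v : V, Integrable (fun x => μ x * ι u x * ι v x) vol)
    (hτ : ∀ u v : V, Integrable (fun y => τ u y * τ v y) surf) : V →ₗ[ℝ] V →ₗ[ℝ] ℝ :=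
  α • (innerₗ G).compl₁₂ grad grad + integralMulBilin vol (LinearMap.mulLeft ℝ μ ∘ₗ ι) ι hι
    + ζ⁻¹ • integralMulBilin surf τ τ hτ

theorem bform_sub_left_s3 {w : Ω → ℝ}
    (hw : ∀ u v : V, Integrable (fun x => w x * ι u x * ι v x) vol)
    (hτ : ∀ u v : V, Integrable (fun y => τ u y * τ v y) surf) (p q v : V) :
    bform vol surf α ζ grad ι τ w (p - q) v
      = bform vol surf α ζ grad ι τ w p v - bform vol surf α ζ grad ι τ w q v :=
  (bformBilin vol surf α ζ grad ι τ w hw hτ).map_sub₂ p q v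

theorem bform_add_weight {μ ν : Ω → ℝ} {p q : V}
    (hμ : Integrable (fun x => μ x * ι p x * ι q x) vol)
    (hν : Integrable (fun x => ν x * ι p x * ι q x) vol) :
    bform vol surf α ζ grad ι τ (μ + ν) p q
      = bform vol surf α ζ grad ι τ μ p q + ∫ x, ν x * ι p x * ι q x ∂vol := by
  have : ∫ x, (μ + ν) x * ι p x * ι q x ∂vol
      = (∫ x, μ x * ι p x * ι q x ∂vol) + ∫ x, ν x * ι p x * ι q x ∂vol := by
    rw [← integral_add hμ hν]
    simp only [Pi.add_apply, add_mul]
  simp only [bform, this]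
  ring

theorem norm_grad_le (hnorm : ∀ v : V, ‖v‖ ^ 2 = ‖grad v‖ ^ 2 + ∫ x, (ι v x) ^ 2 ∂vol)
    (v : V) : ‖grad v‖ ≤ ‖v‖ := by
  have : 0 ≤ ∫ x, (ι v x) ^ 2 ∂vol := integral_nonneg fun x => sq_nonneg _
  nlinarith [hnorm v, norm_nonneg (grad v), norm_nonneg v]

theorem integral_abs_mul_le_norm_mul_norm
    (hnorm : ∀ v : V, ‖v‖ ^ 2 = ‖grad v‖ ^ 2 + ∫ x, (ι v x) ^ 2 ∂vol)
    (h1 : ∀ u v : V, Integrable (fun x => ι u x * ι v x) vol) (p q : V) :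
    ∫ x, |ι p x * ι q x| ∂vol ≤ ‖p‖ * ‖q‖ := by
  have hL2 : ∀ v : V, √(∫ x, ι v x * ι v x ∂vol) ≤ ‖v‖ := fun v => by
    refine Real.sqrt_le_iff.2 ⟨norm_nonneg v, ?_⟩
    simp only [← sq, hnorm v]
    linarith [sq_nonneg ‖grad v‖]
  calc ∫ x, |ι p x * ι q x| ∂vol
      ≤ √(∫ x, ι p x * ι p x ∂vol) * √(∫ x, ι q x * ι q x ∂vol) :=
        integral_abs_mul_le_sqrt_mul_sqrt (h1 p q) (h1 p p) (h1 q q)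
    _ ≤ ‖p‖ * ‖q‖ := by gcongr <;> exact hL2 _

theorem abs_integral_mul_mul_le
    (hnorm : ∀ v : V, ‖v‖ ^ 2 = ‖grad v‖ ^ 2 + ∫ x, (ι v x) ^ 2 ∂vol)
    (h1 : ∀ u v : V, Integrable (fun x => ι u x * ι v x) vol) {w : Ω → ℝ} {M : ℝ}
    (hM : 0 ≤ M) (hwM : ∀ᵐ x ∂vol, |w x| ≤ M)
    (hw : ∀ u v : V, Integrable (fun x => w x * ι u x * ι v x) vol) (p q : V) :
    |∫ x, w x * ι p x * ι q x ∂vol| ≤ M * ‖p‖ * ‖q‖ :=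
  calc |∫ x, w x * ι p x * ι q x ∂vol| ≤ ∫ x, |w x * ι p x * ι q x| ∂vol :=
        abs_integral_le_integral_abs
    _ ≤ ∫ x, M * |ι p x * ι q x| ∂vol := by
        refine integral_mono_ae (hw p q).abs ((h1 p q).abs.const_mul M) ?_
        filter_upwards [hwM] with x hx
        rw [mul_assoc, abs_mul]
        gcongr
    _ = M * ∫ x, |ι p x * ι q x| ∂vol := integral_const_mul _ _
    _ ≤ M * ‖p‖ * ‖q‖ := by
        rw [mul_assoc]
        gcongr
        exact integral_abs_mul_le_norm_mul_norm hnorm h1 p q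

theorem abs_integral_trace_mul_le {Ct : ℝ}
    (htr : ∀ v : V, ∫ y, (τ v y) ^ 2 ∂surf ≤ Ct * ‖v‖ ^ 2)
    (hτ : ∀ u v : V, Integrable (fun y => τ u y * τ v y) surf) (p q : V) :
    |∫ y, τ p y * τ q y ∂surf| ≤ |Ct| * ‖p‖ * ‖q‖ := by
  have hL2 : ∀ v : V, √(∫ y, τ v y * τ v y ∂surf) ≤ √|Ct| * ‖v‖ := fun v => by
    rw [← Real.sqrt_sq (norm_nonneg v), ← Real.sqrt_mul (abs_nonneg Ct)]
    refine Real.sqrt_le_sqrt ?_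
    simp only [← sq]
    exact (htr v).trans (by gcongr; exact le_abs_self Ct)
  calc |∫ y, τ p y * τ q y ∂surf| ≤ ∫ y, |τ p y * τ q y| ∂surf := abs_integral_le_integral_abs
    _ ≤ √(∫ y, τ p y * τ p y ∂surf) * √(∫ y, τ q y * τ q y ∂surf) :=
        integral_abs_mul_le_sqrt_mul_sqrt (hτ p q) (hτ p p) (hτ q q)
    _ ≤ (√|Ct| * ‖p‖) * (√|Ct| * ‖q‖) := by gcongr <;> exact hL2 _
    _ = |Ct| * ‖p‖ * ‖q‖ := by
        rw [mul_mul_mul_comm, Real.mul_self_sqrt (abs_nonneg Ct), mul_assoc]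

theorem bform_coercive (hnorm : ∀ v : V, ‖v‖ ^ 2 = ‖grad v‖ ^ 2 + ∫ x, (ι v x) ^ 2 ∂vol)
    (hζ : 0 ≤ ζ) {m : ℝ} {w : Ω → ℝ} (hw : ∀ᵐ x ∂vol, m ≤ w x) {v : V}
    (hwv : Integrable (fun x => w x * ι v x * ι v x) vol)
    (hv : Integrable (fun x => ι v x * ι v x) vol) :
    min α m * ‖v‖ ^ 2 ≤ bform vol surf α ζ grad ι τ w v v := by
  have hL2 : m * ∫ x, ι v x * ι v x ∂vol ≤ ∫ x, w x * ι v x * ι v x ∂vol := by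
    rw [← integral_const_mul]
    refine integral_mono_ae (hv.const_mul m) hwv ?_
    filter_upwards [hw] with x hx
    rw [mul_assoc]
    exact mul_le_mul_of_nonneg_right hx (mul_self_nonneg _)
  have htrace : 0 ≤ ζ⁻¹ * ∫ y, τ v y * τ v y ∂surf :=
    mul_nonneg (inv_nonneg.2 hζ) (integral_nonneg fun y => mul_self_nonneg _)
  have hv0 : 0 ≤ ∫ x, ι v x * ι v x ∂vol := integral_nonneg fun x => mul_self_nonneg _
  calc min α m * ‖v‖ ^ 2 = min α m * ‖grad v‖ ^ 2 + min α m * ∫ x, ι v x * ι v x ∂vol := by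
        simp only [hnorm v, sq]
        ring
    _ ≤ α * ‖grad v‖ ^ 2 + m * ∫ x, ι v x * ι v x ∂vol := by
        gcongr
        · exact min_le_left _ _
        · exact min_le_right _ _
    _ ≤ bform vol surf α ζ grad ι τ w v v := by
        rw [bform, real_inner_self_eq_norm_sq]
        linarith

theorem abs_bform_le (hnorm : ∀ v : V, ‖v‖ ^ 2 = ‖grad v‖ ^ 2 + ∫ x, (ι v x) ^ 2 ∂vol)
    {Ct : ℝ} (htr : ∀ v : V, ∫ y, (τ v y) ^ 2 ∂surf ≤ Ct * ‖v‖ ^ 2)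
    (h1 : ∀ u v : V, Integrable (fun x => ι u x * ι v x) vol)
    (hτ : ∀ u v : V, Integrable (fun y => τ u y * τ v y) surf) {μ : Ω → ℝ} {M : ℝ}
    (hM : 0 ≤ M) (hμM : ∀ᵐ x ∂vol, |μ x| ≤ M)
    (hμ : ∀ u v : V, Integrable (fun x => μ x * ι u x * ι v x) vol) (p q : V) :
    |bform vol surf α ζ grad ι τ μ p q| ≤ (|α| + M + |ζ⁻¹| * |Ct|) * ‖p‖ * ‖q‖ := by
  have hgrad : |α * ⟪grad p, grad q⟫| ≤ |α| * ‖p‖ * ‖q‖ := by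
    rw [abs_mul, mul_assoc]
    gcongr
    exact (abs_real_inner_le_norm _ _).trans
      (mul_le_mul (norm_grad_le hnorm p) (norm_grad_le hnorm q) (norm_nonneg _) (norm_nonneg _))
  have hvol := abs_integral_mul_mul_le hnorm h1 hM hμM hμ p q
  have hsurf : |ζ⁻¹ * ∫ y, τ p y * τ q y ∂surf| ≤ |ζ⁻¹| * |Ct| * ‖p‖ * ‖q‖ := by
    rw [abs_mul, mul_assoc, mul_assoc, ← mul_assoc |Ct|]
    gcongr
    exact abs_integral_trace_mul_le htr hτ p q
  calc |bform vol surf α ζ grad ι τ μ p q|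
      ≤ |α * ⟪grad p, grad q⟫| + |∫ x, μ x * ι p x * ι q x ∂vol|
        + |ζ⁻¹ * ∫ y, τ p y * τ q y ∂surf| := abs_add_three _ _ _
    _ ≤ (|α| + M + |ζ⁻¹| * |Ct|) * ‖p‖ * ‖q‖ := by linarith

theorem existsUnique_bform_eq [CompleteSpace V]
    (hnorm : ∀ v : V, ‖v‖ ^ 2 = ‖grad v‖ ^ 2 + ∫ x, (ι v x) ^ 2 ∂vol)
    {Ct : ℝ} (htr : ∀ v : V, ∫ y, (τ v y) ^ 2 ∂surf ≤ Ct * ‖v‖ ^ 2)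
    (h1 : ∀ u v : V, Integrable (fun x => ι u x * ι v x) vol)
    (hτ : ∀ u v : V, Integrable (fun y => τ u y * τ v y) surf) (hζ : 0 ≤ ζ)
    {μ : Ω → ℝ} {m M : ℝ} (hαm : 0 < min α m) (hμm : ∀ᵐ x ∂vol, m ≤ μ x) (hM : 0 ≤ M)
    (hμM : ∀ᵐ x ∂vol, |μ x| ≤ M)
    (hμ : ∀ u v : V, Integrable (fun x => μ x * ι u x * ι v x) vol)
    (f : V →ₗ[ℝ] ℝ) {C : ℝ} (hf : ∀ v, ‖f v‖ ≤ C * ‖v‖) :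
    ∃! d : V, ∀ v, bform vol surf α ζ grad ι τ μ d v = f v := by
  let B : V →L[ℝ] V →L[ℝ] ℝ := (bformBilin vol surf α ζ grad ι τ μ hμ hτ).mkContinuous₂ _
    fun p q => (abs_bform_le hnorm htr h1 hτ hM hμM hμ p q)
  have hB : IsCoercive B := ⟨_, hαm, fun v => by
    rw [mul_assoc, ← sq]
    exact bform_coercive hnorm hζ hμm (hμ v v) (h1 v v)⟩
  exact hB.existsUnique_apply_eq (f.mkContinuous C hf)

theorem norm_le_of_bform_self_le
    (hnorm : ∀ v : V, ‖v‖ ^ 2 = ‖grad v‖ ^ 2 + ∫ x, (ι v x) ^ 2 ∂vol)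
    (h1 : ∀ u v : V, Integrable (fun x => ι u x * ι v x) vol) (hζ : 0 ≤ ζ)
    {w : Ω → ℝ} {m : ℝ} (hαm : 0 < min α m) (hw : ∀ᵐ x ∂vol, m ≤ w x)
    (hwι : ∀ u v : V, Integrable (fun x => w x * ι u x * ι v x) vol) {d : V} {M : ℝ}
    (hM : 0 ≤ M) (hd : bform vol surf α ζ grad ι τ w d d ≤ M * ‖d‖) :
    ‖d‖ ≤ (min α m)⁻¹ * M :=
  le_inv_mul_of_mul_sq_le_mul hαm hM (norm_nonneg d)
    ((bform_coercive hnorm hζ hw (hwι d d) (h1 d d)).trans hd)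

theorem norm_le_of_bform_eq_neg_integral
    (hnorm : ∀ v : V, ‖v‖ ^ 2 = ‖grad v‖ ^ 2 + ∫ x, (ι v x) ^ 2 ∂vol)
    (h1 : ∀ u v : V, Integrable (fun x => ι u x * ι v x) vol) (hζ : 0 ≤ ζ)
    {w : Ω → ℝ} {m : ℝ} (hαm : 0 < min α m) (hw : ∀ᵐ x ∂vol, m ≤ w x)
    (hwι : ∀ u v : V, Integrable (fun x => w x * ι u x * ι v x) vol)
    {ν : Ω → ℝ} {K : ℝ} (hK0 : 0 ≤ K) (hK : ∀ᵐ x ∂vol, |ν x| ≤ K)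
    (hνι : ∀ u v : V, Integrable (fun x => ν x * ι u x * ι v x) vol) {d z : V}
    (hd : ∀ v, bform vol surf α ζ grad ι τ w d v = -∫ x, ν x * ι z x * ι v x ∂vol) :
    ‖d‖ ≤ (min α m)⁻¹ * (K * ‖z‖) := by
  have hdd : bform vol surf α ζ grad ι τ w d d ≤ K * ‖z‖ * ‖d‖ :=
    calc bform vol surf α ζ grad ι τ w d d ≤ |∫ x, ν x * ι z x * ι d x ∂vol| := by
          rw [hd d]
          exact neg_le_abs _
      _ ≤ K * ‖z‖ * ‖d‖ := abs_integral_mul_mul_le hnorm h1 hK0 hK hνι z d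
  exact norm_le_of_bform_self_le hnorm h1 hζ hαm hw hwι (by positivity) hdd

theorem existsUnique_bform_eq_neg_integral [CompleteSpace V]
    (hnorm : ∀ v : V, ‖v‖ ^ 2 = ‖grad v‖ ^ 2 + ∫ x, (ι v x) ^ 2 ∂vol)
    {Ct : ℝ} (htr : ∀ v : V, ∫ y, (τ v y) ^ 2 ∂surf ≤ Ct * ‖v‖ ^ 2)
    (h1 : ∀ u v : V, Integrable (fun x => ι u x * ι v x) vol)
    (hτ : ∀ u v : V, Integrable (fun y => τ u y * τ v y) surf) (hζ : 0 ≤ ζ)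
    {μ : Ω → ℝ} {m M : ℝ} (hαm : 0 < min α m) (hμm : ∀ᵐ x ∂vol, m ≤ μ x) (hM : 0 ≤ M)
    (hμM : ∀ᵐ x ∂vol, |μ x| ≤ M)
    (hμ : ∀ u v : V, Integrable (fun x => μ x * ι u x * ι v x) vol)
    {ν : Ω → ℝ} {K : ℝ} (hK0 : 0 ≤ K) (hK : ∀ᵐ x ∂vol, |ν x| ≤ K)
    (hν : ∀ u v : V, Integrable (fun x => ν x * ι u x * ι v x) vol) (z : V) :
    ∃! d : V, ∀ v, bform vol surf α ζ grad ι τ μ d v = -∫ x, ν x * ι z x * ι v x ∂vol :=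
  existsUnique_bform_eq hnorm htr h1 hτ hζ hαm hμm hM hμM hμ
    (-(integralMulBilin vol (LinearMap.mulLeft ℝ ν ∘ₗ ι) ι hν z)) (C := K * ‖z‖) fun v => by
      show |-∫ x, ν x * ι z x * ι v x ∂vol| ≤ K * ‖z‖ * ‖v‖
      rw [abs_neg]
      exact abs_integral_mul_mul_le hnorm h1 hK0 hK hν z v

theorem bform_add_weight_sub_eq {μ ν : Ω → ℝ}
    (hμ : ∀ u v : V, Integrable (fun x => μ x * ι u x * ι v x) vol)
    (hν : ∀ u v : V, Integrable (fun x => ν x * ι u x * ι v x) vol)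
    (hτ : ∀ u v : V, Integrable (fun y => τ u y * τ v y) surf) {l : V → ℝ} {u u' : V}
    (hu : ∀ v, bform vol surf α ζ grad ι τ μ u v = l v)
    (hu' : ∀ v, bform vol surf α ζ grad ι τ (μ + ν) u' v = l v) (v : V) :
    bform vol surf α ζ grad ι τ (μ + ν) (u' - u) v = -∫ x, ν x * ι u x * ι v x ∂vol := by
  have hμν : ∀ p q : V, Integrable (fun x => (μ + ν) x * ι p x * ι q x) vol := fun p q =>
    ((hμ p q).add (hν p q)).congr (.of_forall fun x => by simp only [Pi.add_apply]; ring)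
  rw [bform_sub_left_s3 hμν hτ, hu',
    bform_add_weight (hμ u v) (hν u v), hu]
  ring

theorem bform_sub_eq_of_add_weight {μ ν : Ω → ℝ}
    (hμ : ∀ u v : V, Integrable (fun x => μ x * ι u x * ι v x) vol)
    (hν : ∀ u v : V, Integrable (fun x => ν x * ι u x * ι v x) vol)
    (hτ : ∀ u v : V, Integrable (fun y => τ u y * τ v y) surf) {u d ud : V}
    (hd : ∀ v, bform vol surf α ζ grad ι τ (μ + ν) d v = -∫ x, ν x * ι u x * ι v x ∂vol)
    (hud : ∀ v, bform vol surf α ζ grad ι τ μ ud v = -∫ x, ν x * ι u x * ι v x ∂vol)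
    (v : V) :
    bform vol surf α ζ grad ι τ μ (d - ud) v = -∫ x, ν x * ι d x * ι v x ∂vol := by
  have hμd : bform vol surf α ζ grad ι τ μ d v
      = -(∫ x, ν x * ι u x * ι v x ∂vol) - ∫ x, ν x * ι d x * ι v x ∂vol := by
    rw [eq_sub_iff_add_eq, ← bform_add_weight (hμ d v) (hν d v), hd]
  rw [bform_sub_left_s3 hμ hτ, hμd, hud]
  ring

end

theorem statement_3_general {V G Ω Γ : Type*}
    [NormedAddCommGroup V] [InnerProductSpace ℝ V] [CompleteSpace V]
    [NormedAddCommGroup G] [InnerProductSpace ℝ G]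
    [MeasurableSpace Ω] [MeasurableSpace Γ]
    (vol : Measure Ω) (surf : Measure Γ)
    (α ζ μmin μmax : ℝ) (hα : 0 < α) (hζ : 0 < ζ) (hμmin : 0 < μmin)
    (grad : V →ₗ[ℝ] G) (ι : V →ₗ[ℝ] Ω → ℝ) (τ : V →ₗ[ℝ] Γ → ℝ)
    -- the `H¹(Ω)` norm of `V`
    (hnorm : ∀ v : V, ‖v‖ ^ 2 = ‖grad v‖ ^ 2 + ∫ x, (ι v x) ^ 2 ∂vol)
    -- boundedness of the trace operator
    (Ct : ℝ)
    (htr : ∀ v : V, ∫ y, (τ v y) ^ 2 ∂surf ≤ Ct * ‖v‖ ^ 2)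
    -- integrability of the products appearing in the computations
    (hι : ∀ (w : Ω → ℝ) (u v : V), Integrable (fun x => w x * ι u x * ι v x) vol)
    (hτ : ∀ u v : V, Integrable (fun y => τ u y * τ v y) surf)
    (l : V →L[ℝ] ℝ)
    (μ ν : Ω → ℝ)
    -- `μ` lies in the interior of `A` and `μ + ν ∈ A`
    (hμ : ∀ᵐ x ∂vol, μmin < μ x ∧ μ x < μmax)
    (hμν : ∀ᵐ x ∂vol, μmin ≤ μ x + ν x ∧ μ x + ν x ≤ μmax)
    (K : ℝ) (hK0 : 0 ≤ K) (hK : ∀ᵐ x ∂vol, |ν x| ≤ K)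
    -- `u = F(μ)` and `u' = F(μ + ν)` are the corresponding states
    (u u' : V)
    (hu : ∀ v : V, bform vol surf α ζ grad ι τ μ u v = l v)
    (hu' : ∀ v : V, bform vol surf α ζ grad ι τ (μ + ν) u' v = l v) :
    (∃! ud : V, ∀ v : V,
        bform vol surf α ζ grad ι τ μ ud v = -∫ x, ν x * ι u x * ι v x ∂vol) ∧
    (∀ ud : V, (∀ v : V,
        bform vol surf α ζ grad ι τ μ ud v = -∫ x, ν x * ι u x * ι v x ∂vol) →
      ‖u' - u - ud‖ ≤ ((min α μmin)⁻¹) ^ 3 * ‖l‖ * K ^ 2) := by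
  set c := min α μmin
  have hc : 0 < c := lt_min hα hμmin
  have h1 : ∀ u v : V, Integrable (fun x => ι u x * ι v x) vol := fun u v => by
    simpa using hι (fun _ => 1) u v
  have hμm : ∀ᵐ x ∂vol, μmin ≤ μ x := hμ.mono fun x hx => hx.1.le
  have hμνm : ∀ᵐ x ∂vol, μmin ≤ (μ + ν) x := hμν.mono fun x hx => hx.1
  have hμM : ∀ᵐ x ∂vol, |μ x| ≤ |μmax| := hμ.mono fun x hx =>
    abs_le.2 ⟨by linarith [abs_nonneg μmax], hx.2.le.trans (le_abs_self _)⟩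
  have hu_le : ‖u‖ ≤ c⁻¹ * ‖l‖ := norm_le_of_bform_self_le hnorm h1 hζ.le hc hμm (hι μ)
    (norm_nonneg l) (by rw [hu]; exact (le_abs_self _).trans (l.le_opNorm u))
  have hdiff_eq := bform_add_weight_sub_eq (hι μ) (hι ν) hτ hu hu'
  have hdiff := norm_le_of_bform_eq_neg_integral hnorm h1 hζ.le hc hμνm (hι _) hK0 hK (hι ν)
    hdiff_eq
  refine ⟨existsUnique_bform_eq_neg_integral hnorm htr h1 hτ hζ.le hc hμm (abs_nonneg μmax)
    hμM (hι μ) hK0 hK (hι ν) u, fun ud hud => ?_⟩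
  have hrem := norm_le_of_bform_eq_neg_integral hnorm h1 hζ.le hc hμm (hι μ) hK0 hK (hι ν)
    (bform_sub_eq_of_add_weight (hι μ) (hι ν) hτ hdiff_eq hud)
  calc ‖u' - u - ud‖ ≤ c⁻¹ * (K * ‖u' - u‖) := hrem
    _ ≤ c⁻¹ * (K * (c⁻¹ * (K * (c⁻¹ * ‖l‖)))) := by gcongr; exact hdiff.trans (by gcongr)
    _ = c⁻¹ ^ 3 * ‖l‖ * K ^ 2 := by ring

/-- For `μ` in the interior of the admissible set and an admissible
direction `ν`, the solution operator `F` is (Fréchet) differentiable at `μ`: there is a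
unique `u̇ ∈ H¹(Ω)` with `a(μ; u̇, v) = −∫_Ω ν u v` for all `v`, and the remainder
estimate `‖F(μ+ν) − F(μ) − u̇‖ ≤ c_b³ c_f ‖ν‖²_{L^∞}` holds. -/
theorem statement_3 {V G Ω Γ : Type*}
    [NormedAddCommGroup V] [InnerProductSpace ℝ V] [CompleteSpace V]
    [NormedAddCommGroup G] [InnerProductSpace ℝ G]
    [MeasurableSpace Ω] [MeasurableSpace Γ]
    (vol : Measure Ω) (surf : Measure Γ)
    (α ζ μmin μmax : ℝ) (hα : 0 < α) (hζ : 0 < ζ) (hμmin : 0 < μmin)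
    (grad : V →ₗ[ℝ] G) (ι : V →ₗ[ℝ] Ω → ℝ) (τ : V →ₗ[ℝ] Γ → ℝ)
    -- the `H¹(Ω)` norm of `V`
    (hnorm : ∀ v : V, ‖v‖ ^ 2 = ‖grad v‖ ^ 2 + ∫ x, (ι v x) ^ 2 ∂vol)
    -- boundedness of the trace operator
    (Ct : ℝ) (hCt : 0 < Ct)
    (htr : ∀ v : V, ∫ y, (τ v y) ^ 2 ∂surf ≤ Ct * ‖v‖ ^ 2)
    -- integrability of the products appearing in the computations
    (hι : ∀ (w : Ω → ℝ) (u v : V), Integrable (fun x => w x * ι u x * ι v x) vol)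
    (hτ : ∀ u v : V, Integrable (fun y => τ u y * τ v y) surf)
    (l : V →L[ℝ] ℝ)
    (μ ν : Ω → ℝ)
    -- `μ` lies in the interior of `A` and `μ + ν ∈ A`
    (hμ : ∀ᵐ x ∂vol, μmin < μ x ∧ μ x < μmax)
    (hμν : ∀ᵐ x ∂vol, μmin ≤ μ x + ν x ∧ μ x + ν x ≤ μmax)
    (K : ℝ) (hK0 : 0 ≤ K) (hK : ∀ᵐ x ∂vol, |ν x| ≤ K)
    -- `u = F(μ)` and `u' = F(μ + ν)` are the corresponding states
    (u u' : V)
    (hu : ∀ v : V, bform vol surf α ζ grad ι τ μ u v = l v)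
    (hu' : ∀ v : V, bform vol surf α ζ grad ι τ (μ + ν) u' v = l v) :
    (∃! ud : V, ∀ v : V,
        bform vol surf α ζ grad ι τ μ ud v = -∫ x, ν x * ι u x * ι v x ∂vol) ∧
    (∀ ud : V, (∀ v : V,
        bform vol surf α ζ grad ι τ μ ud v = -∫ x, ν x * ι u x * ι v x ∂vol) →
      ‖u' - u - ud‖ ≤ ((min α μmin)⁻¹) ^ 3 * ‖l‖ * K ^ 2) :=
  statement_3_general vol surf α ζ μmin μmax hα hζ hμmin grad ι τ hnorm Ct htr hι hτ l μ ν hμ hμν K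
    hK0 hK u u' hu hu'
end

section
/- For u, v ∈ H²(Ω), a scalar Lipschitz coefficient α, and a Lipschitz vector field V, the following pointwise identity holds: −(∇α·V)(∇u·∇v) − α A ∇u·∇v = div( α(V·∇u)∇v + α(V·∇v)∇u − α(∇u·∇v)V ) − (V·∇u) div(α∇v) − (V·∇v) div(α∇u), where A = (div V) id − DV − (DV)^⊤. -/
/-- The gradient of `f : ℝ^d → ℝ` as a vector: `(pgrad f x) i = ∂_i f (x)`. -/
noncomputable def pgrad {d : ℕ} (f : (Fin d → ℝ) → ℝ) (x : Fin d → ℝ) : Fin d → ℝ :=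
  fun i => fderiv ℝ f x (Pi.single i 1)

/-- Divergence of a vector field `W : ℝ^d → ℝ^d`. -/
noncomputable def pdiv {d : ℕ} (W : (Fin d → ℝ) → (Fin d → ℝ)) (x : Fin d → ℝ) : ℝ :=
  ∑ i, fderiv ℝ (fun y => W y i) x (Pi.single i 1)

/-- Euclidean dot product. -/
def dotp {d : ℕ} (a b : Fin d → ℝ) : ℝ := ∑ i, a i * b i


/-!
Expand the divergence of the vector field with the product rules
`div (f • W) = ∇f · W + f div W` and `∇ (P · Q) = (DP)ᵀ Q + (DQ)ᵀ P`. What remains is a polynomial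
identity in `α`, `∇α`, `V`, `DV`, `∇u`, `∇v` and the Hessians of `u` and `v`, which holds because
the Hessians are symmetric.
-/

open Matrix

variable {d : ℕ}

noncomputable def jac (W : (Fin d → ℝ) → Fin d → ℝ) (x : Fin d → ℝ) : Matrix (Fin d) (Fin d) ℝ :=
  Matrix.of fun i j => pgrad (fun y => W y i) x j

section Calculus

variable {x : Fin d → ℝ} {f g : (Fin d → ℝ) → ℝ} {P Q : (Fin d → ℝ) → Fin d → ℝ}

@[fun_prop]
lemma DifferentiableAt.dotp (hP : DifferentiableAt ℝ P x) (hQ : DifferentiableAt ℝ Q x) :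
    DifferentiableAt ℝ (fun y => dotp (P y) (Q y)) x := by
  rw [differentiableAt_pi] at hP hQ
  unfold _root_.dotp
  fun_prop

lemma differentiableAt_pgrad {u : (Fin d → ℝ) → ℝ} (hu : ContDiffAt ℝ 2 u x) :
    DifferentiableAt ℝ (pgrad u) x := by
  have h : ContDiffAt ℝ 1 (fderiv ℝ u) x := hu.fderiv_right (by norm_num)
  exact differentiableAt_pi.mpr fun i =>
    (h.differentiableAt one_ne_zero).clm_apply (differentiableAt_const _)

lemma pgrad_mul (hf : DifferentiableAt ℝ f x) (hg : DifferentiableAt ℝ g x) :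
    pgrad (fun y => f y * g y) x = g x • pgrad f x + f x • pgrad g x := by
  ext i
  simp only [pgrad, fderiv_fun_mul hf hg, _root_.add_apply, _root_.smul_apply, smul_eq_mul,
    Pi.add_apply, Pi.smul_apply]
  ring

lemma pgrad_dotp (hP : DifferentiableAt ℝ P x) (hQ : DifferentiableAt ℝ Q x) :
    pgrad (fun y => dotp (P y) (Q y)) x = (jac P x)ᵀ *ᵥ Q x + (jac Q x)ᵀ *ᵥ P x := by
  rw [differentiableAt_pi] at hP hQ
  ext i
  unfold pgrad _root_.dotp
  rw [fderiv_fun_sum (fun k _ => (hP k).fun_mul (hQ k))]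
  simp only [fderiv_fun_mul (hP _) (hQ _), Finset.sum_add_distrib, _root_.add_apply,
    _root_.sum_apply, _root_.smul_apply, smul_eq_mul, jac, pgrad, Pi.add_apply, mulVec, dotProduct,
    transpose_apply, of_apply]
  rw [add_comm]
  simp only [mul_comm]

lemma pdiv_add (hP : DifferentiableAt ℝ P x) (hQ : DifferentiableAt ℝ Q x) :
    pdiv (fun y => P y + Q y) x = pdiv P x + pdiv Q x := by
  rw [differentiableAt_pi] at hP hQ
  simp [pdiv, fderiv_fun_add (hP _) (hQ _), Finset.sum_add_distrib]

lemma pdiv_sub (hP : DifferentiableAt ℝ P x) (hQ : DifferentiableAt ℝ Q x) :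
    pdiv (fun y => P y - Q y) x = pdiv P x - pdiv Q x := by
  rw [differentiableAt_pi] at hP hQ
  simp [pdiv, fderiv_fun_sub (hP _) (hQ _), Finset.sum_sub_distrib]

lemma pdiv_smul (hf : DifferentiableAt ℝ f x) (hP : DifferentiableAt ℝ P x) :
    pdiv (fun y => f y • P y) x = pgrad f x ⬝ᵥ P x + f x * pdiv P x := by
  rw [differentiableAt_pi] at hP
  simp only [pdiv, Pi.smul_apply, smul_eq_mul, fderiv_fun_mul hf (hP _), _root_.add_apply,
    _root_.smul_apply, Finset.sum_add_distrib, dotProduct, pgrad, Finset.mul_sum]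
  simp only [mul_comm, add_comm]

lemma jac_pgrad_isSymm {u : (Fin d → ℝ) → ℝ} (hu : ContDiffAt ℝ 2 u x) :
    (jac (pgrad u) x).IsSymm := by
  have h : ContDiffAt ℝ 1 (fderiv ℝ u) x := hu.fderiv_right (by norm_num)
  have hsymm := hu.isSymmSndFDerivAt (by simp [minSmoothness_of_isRCLikeNormedField])
  ext i j
  simp only [jac, pgrad, fderiv_clm_apply (h.differentiableAt one_ne_zero) (differentiableAt_const _),
    fderiv_fun_const, Pi.zero_apply, ContinuousLinearMap.comp_zero, zero_add,
    ContinuousLinearMap.flip_apply, transpose_apply, of_apply]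
  exact hsymm _ _

end Calculus

lemma transpose_mulVec_dotProduct (M : Matrix (Fin d) (Fin d) ℝ) (v w : Fin d → ℝ) :
    (Mᵀ *ᵥ v) ⬝ᵥ w = (M *ᵥ w) ⬝ᵥ v := by
  rw [mulVec_transpose, ← dotProduct_mulVec, dotProduct_comm]

lemma sum_sum_mul_mul_eq_transpose_mulVec_dotProduct (M : Matrix (Fin d) (Fin d) ℝ)
    (v w : Fin d → ℝ) : ∑ i, ∑ j, M j i * v j * w i = (Mᵀ *ᵥ v) ⬝ᵥ w := by
  simp only [dotProduct, mulVec, transpose_apply, Finset.sum_mul]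

lemma div_identity_algebra (a : ℝ) (A V U W : Fin d → ℝ) (J HU HV : Matrix (Fin d) (Fin d) ℝ)
    (hU : HU.IsSymm) (hV : HV.IsSymm) :
    -(A ⬝ᵥ V) * (U ⬝ᵥ W)
        - a * (J.trace * (U ⬝ᵥ W) - ∑ i, ∑ j, J i j * U j * W i - ∑ i, ∑ j, J j i * U j * W i)
      = ((V ⬝ᵥ U) • A + a • (Jᵀ *ᵥ U + HUᵀ *ᵥ V)) ⬝ᵥ W + a * (V ⬝ᵥ U) * HV.trace
        + (((V ⬝ᵥ W) • A + a • (Jᵀ *ᵥ W + HVᵀ *ᵥ V)) ⬝ᵥ U + a * (V ⬝ᵥ W) * HU.trace)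
        - (((U ⬝ᵥ W) • A + a • (HUᵀ *ᵥ W + HVᵀ *ᵥ U)) ⬝ᵥ V + a * (U ⬝ᵥ W) * J.trace)
        - (V ⬝ᵥ U) * (A ⬝ᵥ W + a * HV.trace) - (V ⬝ᵥ W) * (A ⬝ᵥ U + a * HU.trace) := by
  have sum_comm_J : ∑ i, ∑ j, J i j * U j * W i = ∑ i, ∑ j, J j i * W j * U i := by
    rw [Finset.sum_comm]; simp only [mul_right_comm]
  rw [sum_comm_J, sum_sum_mul_mul_eq_transpose_mulVec_dotProduct,
    sum_sum_mul_mul_eq_transpose_mulVec_dotProduct]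
  simp only [add_dotProduct, smul_dotProduct, smul_eq_mul]
  rw [transpose_mulVec_dotProduct HU V W, transpose_mulVec_dotProduct HV V U, hU.eq, hV.eq,
    dotProduct_comm V U, dotProduct_comm V W, dotProduct_comm A V]
  ring

/-- For `u, v ∈ H²` (here `C²`), a differentiable scalar
coefficient `α` and a differentiable vector field `V`, with
`A = (div V) id − DV − (DV)ᵀ`, the pointwise identity
`−(∇α·V)(∇u·∇v) − α A∇u·∇v
  = div( α(V·∇u)∇v + α(V·∇v)∇u − α(∇u·∇v)V )
      − (V·∇u) div(α∇v) − (V·∇v) div(α∇u)` holds. -/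
theorem statement_14 {d : ℕ}
    (u v : (Fin d → ℝ) → ℝ) (hu : ContDiff ℝ 2 u) (hv : ContDiff ℝ 2 v)
    (α : (Fin d → ℝ) → ℝ) (hα : Differentiable ℝ α)
    (V : (Fin d → ℝ) → (Fin d → ℝ)) (hV : Differentiable ℝ V) :
    ∀ x : Fin d → ℝ,
      -(dotp (pgrad α x) (V x)) * dotp (pgrad u x) (pgrad v x)
        - α x * (pdiv V x * dotp (pgrad u x) (pgrad v x)
            - (∑ i, ∑ j, (fderiv ℝ (fun y => V y i) x (Pi.single j 1))
                * pgrad u x j * pgrad v x i)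
            - (∑ i, ∑ j, (fderiv ℝ (fun y => V y j) x (Pi.single i 1))
                * pgrad u x j * pgrad v x i))
      = pdiv (fun y =>
            (α y * dotp (V y) (pgrad u y)) • pgrad v y
              + (α y * dotp (V y) (pgrad v y)) • pgrad u y
              - (α y * dotp (pgrad u y) (pgrad v y)) • V y) x
        - dotp (V x) (pgrad u x) * pdiv (fun y => α y • pgrad v y) x
        - dotp (V x) (pgrad v x) * pdiv (fun y => α y • pgrad u y) x := by
  intro x
  have hgu : Differentiable ℝ (pgrad u) := fun _ => differentiableAt_pgrad hu.contDiffAt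
  have hgv : Differentiable ℝ (pgrad v) := fun _ => differentiableAt_pgrad hv.contDiffAt
  rw [pdiv_sub, pdiv_add, pdiv_smul, pdiv_smul, pdiv_smul, pdiv_smul, pdiv_smul,
    pgrad_mul, pgrad_mul, pgrad_mul, pgrad_dotp, pgrad_dotp, pgrad_dotp]
  -- `pdiv W x` is `(jac W x).trace` and the `fderiv` terms on the left are entries of `jac V x`,
  -- both by definition.
  · exact div_identity_algebra (α x) (pgrad α x) (V x) (pgrad u x) (pgrad v x) (jac V x)
      (jac (pgrad u) x) (jac (pgrad v) x) (jac_pgrad_isSymm hu.contDiffAt)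
      (jac_pgrad_isSymm hv.contDiffAt)
  all_goals fun_prop
end

section
/- Let {ω⁽ⁿ⁾} be measurable subsets of ℝ^d whose characteristic functions χ_{ω⁽ⁿ⁾} converge weakly-* in L^∞(ℝ^d) to the characteristic function χ_ω of a measurable set ω. Then χ_{ω⁽ⁿ⁾} → χ_ω strongly in L^p_loc(ℝ^d) for every p < ∞ and almost everywhere (along a subsequence for the a.e. claim). -/
/-! Because `χ_t² = χ_t`, one has `|χ_{s n} - χ_t| = χ_{s n} (1 - 2 χ_t) + χ_t` pointwise, so testing
the weak-* convergence against `(1 - 2 χ_t) g` gives `∫ |χ_{s n} - χ_t| g → ∫ (2 χ_t - 2 χ_t²) g = 0`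
for every `g ∈ L¹`. With `g = χ_K` this is `L^p_loc` convergence, since `|χ_{s n} - χ_t|` only takes
the values `0` and `1`. With `g > 0` it is `L¹` convergence for the finite measure `g μ`, which has
the same null sets as `μ`; convergence in measure then yields an a.e. convergent subsequence. -/

open MeasureTheory Filter

open scoped NNReal ENNReal Topology

namespace WeakStarIndicator

local notation:max "χ" s:max => Set.indicator s fun _ => (1 : ℝ)

variable {α : Type*}

def WeakStarTendsto [MeasurableSpace α] (μ : Measure α) (f : ℕ → α → ℝ) (g : α → ℝ) : Prop :=
  ∀ ψ : α → ℝ, Integrable ψ μ →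
    Tendsto (fun n => ∫ x, f n x * ψ x ∂μ) atTop (𝓝 (∫ x, g x * ψ x ∂μ))

lemma abs_indicator_one_sub_indicator_one (s t : Set α) (x : α) :
    |χ s x - χ t x| = χ s x * (1 - 2 * χ t x) + χ t x := by
  by_cases hs : x ∈ s <;> by_cases ht : x ∈ t <;> norm_num [hs, ht]

lemma abs_indicator_one_sub_indicator_one_rpow (s t : Set α) (x : α) {p : ℝ} (hp : p ≠ 0) :
    |χ s x - χ t x| ^ p = |χ s x - χ t x| := by
  by_cases hs : x ∈ s <;> by_cases ht : x ∈ t <;> simp [hs, ht, hp]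

lemma abs_indicator_one_sub_indicator_one_le_one (s t : Set α) (x : α) :
    |χ s x - χ t x| ≤ 1 := by
  by_cases hs : x ∈ s <;> by_cases ht : x ∈ t <;> norm_num [hs, ht]

lemma norm_indicator_one_le (s : Set α) (x : α) : ‖χ s x‖ ≤ 1 := by
  by_cases hs : x ∈ s <;> simp [hs]

variable [MeasurableSpace α] {μ : Measure α} {s : ℕ → Set α} {t : Set α}

lemma tendsto_integral_abs_indicator_sub_mul (hs : ∀ n, MeasurableSet (s n))
    (ht : MeasurableSet t) (hweak : WeakStarTendsto μ (fun n => χ (s n)) (χ t))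
    {g : α → ℝ} (hg : Integrable g μ) :
    Tendsto (fun n => ∫ x, |χ (s n) x - χ t x| * g x ∂μ) atTop (𝓝 0) := by
  have hχ : ∀ u : Set α, MeasurableSet u → AEStronglyMeasurable (χ u) μ := fun u hu =>
    (measurable_const.indicator hu).aestronglyMeasurable
  have hψ : Integrable (fun x => (1 - 2 * χ t x) * g x) μ := by
    refine hg.bdd_mul (c := 3) (aestronglyMeasurable_const.sub ((hχ t ht).const_mul 2))
      (Eventually.of_forall fun x => ?_)
    by_cases hx : x ∈ t <;> norm_num [hx]
  have htg : Integrable (fun x => χ t x * g x) μ :=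
    hg.bdd_mul (hχ t ht) (Eventually.of_forall (norm_indicator_one_le t))
  have hsplit : ∀ n, ∫ x, |χ (s n) x - χ t x| * g x ∂μ
      = ∫ x, χ (s n) x * ((1 - 2 * χ t x) * g x) ∂μ + ∫ x, χ t x * g x ∂μ := fun n => by
    rw [← integral_add (hψ.bdd_mul (hχ _ (hs n)) (Eventually.of_forall
      (norm_indicator_one_le _))) htg]
    congr 1 with x
    rw [abs_indicator_one_sub_indicator_one]
    ring
  have hlim : ∫ x, χ t x * ((1 - 2 * χ t x) * g x) ∂μ + ∫ x, χ t x * g x ∂μ = 0 := by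
    rw [← integral_add (hψ.bdd_mul (hχ t ht) (Eventually.of_forall
      (norm_indicator_one_le _))) htg]
    refine integral_eq_zero_of_ae (Eventually.of_forall fun x => ?_)
    by_cases hx : x ∈ t <;> norm_num [hx]
  simpa only [hsplit, hlim] using (hweak _ hψ).add_const (∫ x, χ t x * g x ∂μ)

lemma tendsto_setIntegral_abs_indicator_sub_rpow (hs : ∀ n, MeasurableSet (s n))
    (ht : MeasurableSet t) (hweak : WeakStarTendsto μ (fun n => χ (s n)) (χ t))
    {K : Set α} (hK : MeasurableSet K) (hμK : μ K ≠ ∞) {p : ℝ} (hp : p ≠ 0) :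
    Tendsto (fun n => ∫ x in K, |χ (s n) x - χ t x| ^ p ∂μ) atTop (𝓝 0) := by
  have hχK : Integrable (χ K) μ := (integrable_indicator_iff hK).2 (integrableOn_const hμK)
  refine (tendsto_integral_abs_indicator_sub_mul hs ht hweak hχK).congr fun n => ?_
  rw [← integral_indicator hK]
  congr 1 with x
  by_cases hx : x ∈ K <;> simp [hx, abs_indicator_one_sub_indicator_one_rpow _ _ _ hp]

lemma exists_subseq_tendsto_ae_zero_of_tendsto_integral_mul {F : ℕ → α → ℝ} {ρ : α → ℝ≥0}
    (hρ : Measurable ρ) (hρ_pos : ∀ x, 0 < ρ x) (hF : ∀ n, AEStronglyMeasurable (F n) μ)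
    (hF_nonneg : ∀ n x, 0 ≤ F n x) (hFρ : ∀ n, Integrable (fun x => F n x * ρ x) μ)
    (hlim : Tendsto (fun n => ∫ x, F n x * ρ x ∂μ) atTop (𝓝 0)) :
    ∃ φ : ℕ → ℕ, StrictMono φ ∧ ∀ᵐ x ∂μ, Tendsto (fun m => F (φ m) x) atTop (𝓝 0) := by
  set ν := μ.withDensity fun x => (ρ x : ℝ≥0∞)
  have hνμ : ν ≪ μ := withDensity_absolutelyContinuous μ _
  have hμν : μ ≪ ν := withDensity_absolutelyContinuous' hρ.coe_nnreal_ennreal.aemeasurable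
    (Eventually.of_forall fun x => by simpa using (hρ_pos x).ne')
  have hnorm : ∀ n, eLpNorm (F n - 0) 1 ν = ENNReal.ofReal (∫ x, F n x * ρ x ∂μ) := fun n => by
    rw [sub_zero, eLpNorm_one_eq_lintegral_enorm, lintegral_withDensity_eq_lintegral_mul₀
      hρ.coe_nnreal_ennreal.aemeasurable (hF n).enorm,
      ofReal_integral_eq_lintegral_ofReal (hFρ n)
        (Eventually.of_forall fun x => mul_nonneg (hF_nonneg n x) (ρ x).2)]
    congr 1 with x
    simp [ENNReal.ofReal_mul (hF_nonneg n x), Real.enorm_of_nonneg (hF_nonneg n x), mul_comm]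
  have hmeas : TendstoInMeasure ν F atTop 0 := by
    refine tendstoInMeasure_of_tendsto_eLpNorm one_ne_zero (fun n => (hF n).mono_ac hνμ)
      aestronglyMeasurable_zero ?_
    simpa only [hnorm, ENNReal.ofReal_zero] using ENNReal.tendsto_ofReal hlim
  obtain ⟨φ, hφ, hae⟩ := hmeas.exists_seq_tendsto_ae
  exact ⟨φ, hφ, hμν.ae_le hae⟩

lemma exists_subseq_tendsto_ae_indicator [SigmaFinite μ] (hs : ∀ n, MeasurableSet (s n))
    (ht : MeasurableSet t) (hweak : WeakStarTendsto μ (fun n => χ (s n)) (χ t)) :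
    ∃ φ : ℕ → ℕ, StrictMono φ ∧ ∀ᵐ x ∂μ, Tendsto (fun m => χ (s (φ m)) x) atTop (𝓝 (χ t x)) := by
  obtain ⟨ρ, hρ_pos, hρ, hρ_lt⟩ := exists_pos_lintegral_lt_of_sigmaFinite μ one_ne_zero
  have hρ_int : Integrable (fun x => (ρ x : ℝ)) μ :=
    ⟨hρ.coe_nnreal_real.aestronglyMeasurable, by
      simpa [HasFiniteIntegral] using hρ_lt.trans ENNReal.one_lt_top⟩
  have hΔ : ∀ n, Measurable fun x => |χ (s n) x - χ t x| := fun n =>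
    ((measurable_const.indicator (hs n)).sub (measurable_const.indicator ht)).abs
  obtain ⟨φ, hφ, hae⟩ := exists_subseq_tendsto_ae_zero_of_tendsto_integral_mul hρ hρ_pos
    (fun n => (hΔ n).aestronglyMeasurable) (fun n x => abs_nonneg _)
    (fun n => hρ_int.bdd_mul (c := 1) (hΔ n).aestronglyMeasurable (Eventually.of_forall
      fun x => by simpa using abs_indicator_one_sub_indicator_one_le_one (s n) t x))
    (tendsto_integral_abs_indicator_sub_mul hs ht hweak hρ_int)
  refine ⟨φ, hφ, hae.mono fun x hx => ?_⟩
  rw [tendsto_iff_norm_sub_tendsto_zero]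
  simpa only [Real.norm_eq_abs] using hx

end WeakStarIndicator

open WeakStarIndicator

/-- If characteristic functions `χ_{ω⁽ⁿ⁾}` of measurable sets
converge weakly-* in `L^∞(ℝ^d)` (i.e., tested against every `ψ ∈ L¹`) to the
characteristic function `χ_ω` of a measurable set, then `χ_{ω⁽ⁿ⁾} → χ_ω` strongly in
`L^p_loc(ℝ^d)` for every `p < ∞`, and almost everywhere along a subsequence. -/
theorem statement_19 {d : ℕ}
    (ω : ℕ → Set (Fin d → ℝ)) (ωlim : Set (Fin d → ℝ))
    (hmeas : ∀ n, MeasurableSet (ω n)) (hlim : MeasurableSet ωlim)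
    (hweak : ∀ ψ : (Fin d → ℝ) → ℝ, Integrable ψ →
      Tendsto (fun n => ∫ x, (ω n).indicator (fun _ => (1:ℝ)) x * ψ x) atTop
        (nhds (∫ x, ωlim.indicator (fun _ => (1:ℝ)) x * ψ x))) :
    (∀ K : Set (Fin d → ℝ), IsCompact K → ∀ p : ℝ, 1 ≤ p →
      Tendsto (fun n => ∫ x in K,
          |(ω n).indicator (fun _ => (1:ℝ)) x
            - ωlim.indicator (fun _ => (1:ℝ)) x| ^ p) atTop (nhds 0)) ∧
    ∃ φ : ℕ → ℕ, StrictMono φ ∧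
      ∀ᵐ x : Fin d → ℝ,
        Tendsto (fun m => (ω (φ m)).indicator (fun _ => (1:ℝ)) x) atTop
          (nhds (ωlim.indicator (fun _ => (1:ℝ)) x)) :=
  ⟨fun _K hK _p hp => tendsto_setIntegral_abs_indicator_sub_rpow hmeas hlim hweak
      hK.measurableSet hK.measure_lt_top.ne (by positivity),
    exists_subseq_tendsto_ae_indicator hmeas hlim hweak⟩
end
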